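/- arXiv:2004.01141 — 2 statements merged into one kernel-verified Lean document; each statement's English description precedes it below -/
import Mathlib

section
/- Let 0 < θ_1 < 1, 0 < θ_2 < θ_1, let θ_k, θ_ℓ ∈ (0, θ_2], let c ∈ ℝ, and set μ* := −c + θ_1 + (1−θ_1)θ_2 (the mean reward of policy (1,2) when ε = 0). With μ((k,ℓ)) := −c + θ_k + (1−θ_k)θ_ℓ, μ((k,1)) := −c + θ_k + (1−θ_k)θ_1, and μ((ℓ,1)) := −c + θ_ℓ + (1−θ_ℓ)θ_1, we have (μ* − μ((k,ℓ))) − (μ* − μ((k,1))) − (1−θ_k)(μ* − μ((ℓ,1))) ≥ (1−θ_k)(θ_1 − θ_2) > 0. -/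
/-!
The left-hand side factors as `(1 - θk) * ((θ1 - θ2) + θ1 * (θ2 - θl))`; the second summand
is nonnegative because `θl ≤ θ2`, and `1 - θk > 0` because `θk ≤ θ2 < θ1 < 1`.
-/

/-- `meanReward c a b` is the paper's `μ((k,ℓ))` with `θ_k = a`, `θ_ℓ = b`. -/
def meanReward (c a b : ℝ) : ℝ := -c + a + (1 - a) * b

lemma exchange_gap_eq (c θ1 θ2 θk θl : ℝ) :
    (meanReward c θ1 θ2 - meanReward c θk θl) - (meanReward c θ1 θ2 - meanReward c θk θ1)
      - (1 - θk) * (meanReward c θ1 θ2 - meanReward c θl θ1)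
      = (1 - θk) * ((θ1 - θ2) + θ1 * (θ2 - θl)) := by
  unfold meanReward
  ring

theorem stmt5_general (θ1 θ2 θk θl c : ℝ)
    (h10 : 0 < θ1) (h11 : θ1 < 1) (h21 : θ2 < θ1)
    (hk : θk ∈ Set.Ioc (0 : ℝ) θ2) (hl : θl ∈ Set.Ioc (0 : ℝ) θ2) :
    (((-c + θ1 + (1 - θ1) * θ2) - (-c + θk + (1 - θk) * θl))
      - ((-c + θ1 + (1 - θ1) * θ2) - (-c + θk + (1 - θk) * θ1))
      - (1 - θk) * ((-c + θ1 + (1 - θ1) * θ2) - (-c + θl + (1 - θl) * θ1))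
        ≥ (1 - θk) * (θ1 - θ2)) ∧
    (0 < (1 - θk) * (θ1 - θ2)) := by
  have hk1 : 0 < 1 - θk := by linarith [hk.2]
  refine ⟨?_, mul_pos hk1 (sub_pos.2 h21)⟩
  refine le_of_le_of_eq ?_ (exchange_gap_eq c θ1 θ2 θk θl).symm
  exact mul_le_mul_of_nonneg_left
    (le_add_of_nonneg_right (mul_nonneg h10.le (sub_nonneg.2 hl.2))) hk1.le

/-- Let `0 < θ_1 < 1`, `0 < θ_2 < θ_1`, `θ_k, θ_ℓ ∈ (0, θ_2]`, `c ∈ ℝ`,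
and set `μ* := −c + θ_1 + (1−θ_1)θ_2` (the mean reward of `(1,2)` when `ε = 0`). With
`μ((k,ℓ)) = −c + θ_k + (1−θ_k)θ_ℓ`, `μ((k,1)) = −c + θ_k + (1−θ_k)θ_1` and
`μ((ℓ,1)) = −c + θ_ℓ + (1−θ_ℓ)θ_1`, we have
`(μ*−μ((k,ℓ))) − (μ*−μ((k,1))) − (1−θ_k)(μ*−μ((ℓ,1))) ≥ (1−θ_k)(θ_1−θ_2) > 0`. -/
theorem stmt5 (θ1 θ2 θk θl c : ℝ)
    (h10 : 0 < θ1) (h11 : θ1 < 1) (h20 : 0 < θ2) (h21 : θ2 < θ1)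
    (hk : θk ∈ Set.Ioc (0 : ℝ) θ2) (hl : θl ∈ Set.Ioc (0 : ℝ) θ2) :
    (((-c + θ1 + (1 - θ1) * θ2) - (-c + θk + (1 - θk) * θl))
      - ((-c + θ1 + (1 - θ1) * θ2) - (-c + θk + (1 - θk) * θ1))
      - (1 - θk) * ((-c + θ1 + (1 - θ1) * θ2) - (-c + θl + (1 - θl) * θ1))
        ≥ (1 - θk) * (θ1 - θ2)) ∧
    (0 < (1 - θk) * (θ1 - θ2)) :=
  stmt5_general θ1 θ2 θk θl c h10 h11 h21 hk hl
end

section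
/- Let ε ∈ (0,1/2), 0 < x < q ≤ θ_1 < 1, and p0(y) := εy + (1−ε)(1−y). Then p0(θ_1)·I(x,q) ≤ (1−ε)x·log(x/q) + ε(1−x)·log((1−x)/(1−q)) + p0(x)·log(p0(x)/p0(q)), where I(x,q) := x log(x/q) + (1−x) log((1−x)/(1−q)). -/
/-!
Since `ε < 1/2`, `p0` is decreasing and `I ≥ 0`, so it suffices to take `θ_1 = q`. For fixed `x`,
the gap `g(t) = R(t) - p0(t) I(x,t)`, with `R(t)` the right-hand side at `q = t`, vanishes at
`t = x` and has derivative `(1 - 2ε) (p0(x) / p0(t) - 1 + I(x,t)) ≥ 0` on `(x, q)`,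
hence `g(q) ≥ 0`.
-/

open Real Set InformationTheory

noncomputable section

/-- The paper's `p0(y)`: the probability that a measurement with noise level `ε` of an arm with
mean `y` reads `0`. `bernKL` is the paper's `I`, and `noisyKL` the divergence between the
observation distributions of the policy `(k,1)`. -/
def noisyZeroProb (ε y : ℝ) : ℝ := ε * y + (1 - ε) * (1 - y)

def bernKL (x t : ℝ) : ℝ := x * log (x / t) + (1 - x) * log ((1 - x) / (1 - t))

def noisyKL (ε x t : ℝ) : ℝ :=
  (1 - ε) * x * log (x / t) + ε * (1 - x) * log ((1 - x) / (1 - t))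
    + noisyZeroProb ε x * log (noisyZeroProb ε x / noisyZeroProb ε t)

def noisyGap (ε x t : ℝ) : ℝ := noisyKL ε x t - noisyZeroProb ε t * bernKL x t

end

section

variable {ε x t : ℝ}

lemma noisyZeroProb_pos (hε0 : 0 < ε) (hε : ε ≤ 1 / 2) (ht : t ≤ 1) : 0 < noisyZeroProb ε t := by
  unfold noisyZeroProb
  nlinarith [mul_nonneg (by linarith : 0 ≤ 1 - 2 * ε) (by linarith : 0 ≤ 1 - t)]

lemma noisyZeroProb_antitone (hε : ε ≤ 1 / 2) : Antitone (noisyZeroProb ε) := by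
  intro a b hab
  unfold noisyZeroProb
  nlinarith

lemma bernKL_eq_klFun (ht0 : t ≠ 0) (ht1 : t ≠ 1) :
    bernKL x t = t * klFun (x / t) + (1 - t) * klFun ((1 - x) / (1 - t)) := by
  have : 1 - t ≠ 0 := sub_ne_zero.mpr (Ne.symm ht1)
  simp only [bernKL, klFun]
  field_simp
  ring

lemma bernKL_nonneg (hx0 : 0 ≤ x) (hx1 : x ≤ 1) (ht0 : 0 < t) (ht1 : t < 1) : 0 ≤ bernKL x t := by
  rw [bernKL_eq_klFun ht0.ne' ht1.ne]
  have h1t : 0 < 1 - t := by linarith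
  have := klFun_nonneg (div_nonneg hx0 ht0.le)
  have := klFun_nonneg (div_nonneg (sub_nonneg.mpr hx1) h1t.le)
  positivity

lemma noisyGap_self : noisyGap ε x x = 0 := by
  simp [noisyGap, noisyKL, bernKL]

lemma HasDerivAt.const_mul_log_const_div {f : ℝ → ℝ} {f' : ℝ} (a b : ℝ) (hb : b ≠ 0)
    (hf : HasDerivAt f f' t) (hft : f t ≠ 0) :
    HasDerivAt (fun s ↦ a * Real.log (b / f s)) (-(a * f' / f t)) t := by
  refine HasDerivAt.congr_deriv
    ((((hasDerivAt_const t b).div hf hft).log (div_ne_zero hb hft)).const_mul a) ?_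
  simp only [Pi.div_apply]
  field_simp
  ring

lemma hasDerivAt_noisyZeroProb : HasDerivAt (noisyZeroProb ε) (2 * ε - 1) t := by
  refine HasDerivAt.congr_deriv
    (((hasDerivAt_id t).const_mul ε).add (((hasDerivAt_id t).const_sub 1).const_mul (1 - ε))) ?_
  ring

lemma hasDerivAt_bernKL (hx0 : x ≠ 0) (hx1 : x ≠ 1) (ht0 : t ≠ 0) (ht1 : t ≠ 1) :
    HasDerivAt (bernKL x) (-(x / t) + (1 - x) / (1 - t)) t := by
  have h1x : 1 - x ≠ 0 := sub_ne_zero.mpr (Ne.symm hx1)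
  have h1t : 1 - t ≠ 0 := sub_ne_zero.mpr (Ne.symm ht1)
  refine HasDerivAt.congr_deriv
    (((hasDerivAt_id t).const_mul_log_const_div x x hx0 ht0).add
      (((hasDerivAt_id t).const_sub 1).const_mul_log_const_div (1 - x) (1 - x) h1x h1t)) ?_
  simp only [id]
  ring

lemma hasDerivAt_noisyKL (hx0 : x ≠ 0) (hx1 : x ≠ 1) (ht0 : t ≠ 0) (ht1 : t ≠ 1)
    (hpx : noisyZeroProb ε x ≠ 0) (hpt : noisyZeroProb ε t ≠ 0) :
    HasDerivAt (noisyKL ε x)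
      (-((1 - ε) * x / t) + ε * (1 - x) / (1 - t)
        + noisyZeroProb ε x * (1 - 2 * ε) / noisyZeroProb ε t) t := by
  have h1x : 1 - x ≠ 0 := sub_ne_zero.mpr (Ne.symm hx1)
  have h1t : 1 - t ≠ 0 := sub_ne_zero.mpr (Ne.symm ht1)
  refine HasDerivAt.congr_deriv
    ((((hasDerivAt_id t).const_mul_log_const_div ((1 - ε) * x) x hx0 ht0).add
      (((hasDerivAt_id t).const_sub 1).const_mul_log_const_div (ε * (1 - x)) (1 - x) h1x h1t)).add
      (hasDerivAt_noisyZeroProb.const_mul_log_const_div _ _ hpx hpt)) ?_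
  simp only [id]
  ring

lemma hasDerivAt_noisyGap (hx0 : x ≠ 0) (hx1 : x ≠ 1) (ht0 : t ≠ 0) (ht1 : t ≠ 1)
    (hpx : noisyZeroProb ε x ≠ 0) (hpt : noisyZeroProb ε t ≠ 0) :
    HasDerivAt (noisyGap ε x)
      ((1 - 2 * ε) * (noisyZeroProb ε x / noisyZeroProb ε t - 1 + bernKL x t)) t := by
  have h1t : 1 - t ≠ 0 := sub_ne_zero.mpr (Ne.symm ht1)
  refine HasDerivAt.congr_deriv ((hasDerivAt_noisyKL hx0 hx1 ht0 ht1 hpx hpt).sub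
    (hasDerivAt_noisyZeroProb.mul (hasDerivAt_bernKL hx0 hx1 ht0 ht1))) ?_
  unfold noisyZeroProb at hpt ⊢
  field_simp
  ring

lemma noisyZeroProb_mul_bernKL_le_noisyKL {q : ℝ} (hε0 : 0 < ε) (hε : ε ≤ 1 / 2) (hx0 : 0 < x)
    (hxq : x ≤ q) (hq1 : q < 1) : noisyZeroProb ε q * bernKL x q ≤ noisyKL ε x q := by
  have hp : ∀ t ≤ q, noisyZeroProb ε t ≠ 0 := fun t ht ↦
    (noisyZeroProb_pos hε0 hε (ht.trans hq1.le)).ne'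
  have hderiv : ∀ t ∈ Icc x q, HasDerivAt (noisyGap ε x)
      ((1 - 2 * ε) * (noisyZeroProb ε x / noisyZeroProb ε t - 1 + bernKL x t)) t :=
    fun t ht ↦ hasDerivAt_noisyGap hx0.ne' (hxq.trans_lt hq1).ne (hx0.trans_le ht.1).ne'
      (ht.2.trans_lt hq1).ne (hp x hxq) (hp t ht.2)
  have hmono : MonotoneOn (noisyGap ε x) (Icc x q) := by
    refine monotoneOn_of_hasDerivWithinAt_nonneg (convex_Icc x q)
      (fun t ht ↦ (hderiv t ht).continuousAt.continuousWithinAt)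
      (fun t ht ↦ (hderiv t (interior_subset ht)).hasDerivWithinAt) fun t ht ↦ ?_
    rw [interior_Icc] at ht
    have hpt := noisyZeroProb_pos hε0 hε (ht.2.le.trans hq1.le)
    have hratio : 1 ≤ noisyZeroProb ε x / noisyZeroProb ε t :=
      (one_le_div hpt).mpr (noisyZeroProb_antitone hε ht.1.le)
    have hkl := bernKL_nonneg hx0.le (hxq.trans hq1.le) (hx0.trans ht.1) (ht.2.trans hq1)
    exact mul_nonneg (by linarith) (by linarith)
  have := hmono (left_mem_Icc.mpr hxq) (right_mem_Icc.mpr hxq) hxq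
  rw [noisyGap_self, noisyGap, sub_nonneg] at this
  exact this

end

/-- For `ε ∈ (0,1/2)`, `0 < x < q ≤ θ_1 < 1` and
`p0(y) := εy + (1−ε)(1−y)`:
`p0(θ_1)·I(x,q) ≤ (1−ε)x·log(x/q) + ε(1−x)·log((1−x)/(1−q)) + p0(x)·log(p0(x)/p0(q))`,
where `I(x,q) := x log(x/q) + (1−x) log((1−x)/(1−q))`. -/
theorem stmt13 (ε x q θ1 : ℝ) (hε0 : 0 < ε) (hε : ε < 1 / 2)
    (hx0 : 0 < x) (hxq : x < q) (hqθ : q ≤ θ1) (hθ1 : θ1 < 1) :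
    (ε * θ1 + (1 - ε) * (1 - θ1)) *
        (x * Real.log (x / q) + (1 - x) * Real.log ((1 - x) / (1 - q)))
      ≤ (1 - ε) * x * Real.log (x / q)
        + ε * (1 - x) * Real.log ((1 - x) / (1 - q))
        + (ε * x + (1 - ε) * (1 - x)) *
            Real.log ((ε * x + (1 - ε) * (1 - x)) / (ε * q + (1 - ε) * (1 - q))) := by
  have hq1 : q < 1 := hqθ.trans_lt hθ1
  show noisyZeroProb ε θ1 * bernKL x q ≤ noisyKL ε x q
  calc noisyZeroProb ε θ1 * bernKL x q ≤ noisyZeroProb ε q * bernKL x q :=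
        mul_le_mul_of_nonneg_right (noisyZeroProb_antitone hε.le hqθ)
          (bernKL_nonneg hx0.le (hxq.trans hq1).le (hx0.trans hxq) hq1)
    _ ≤ noisyKL ε x q := noisyZeroProb_mul_bernKL_le_noisyKL hε0 hε.le hx0 hxq.le hq1
end
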